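/- Suppose A = WΛW* and P = WΣW* share the orthogonal eigenvector matrix W, with Λ, Σ diagonal, Σ positive definite, eigenvalues of A contained in [a,b] avoiding 0 and 1. If x_{j+1} = A·x_j + b for j < k and x_{k+1} comes from one step of Anderson acceleration in the weighted norm ‖P·‖₂ with memory m, then ‖Σ·D_μ⁻¹·W*·e_{k+1}‖₂ ≤ (max_i |Σ_{ii}|)·C(a,b,m)·‖D_μ⁻¹·W*·A·e_k‖₂, where C(a,b,m) = |T_m((2ab − a − b)/(b − a))|⁻¹. -/

import Mathlib

/-!
In the eigenbasis `W` of `A` every operator in sight is diagonal. With `e_j = x_j - x*` and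
`u = Wᵀ e_{k-m}`, the fixed-point steps give `Wᵀ e_{k-m+l} = d^l u`, and since `D_k = (A - I) X_k`
the weighted residual `f_k - D_k c` has eigencoordinates `(d - 1) q_c(d) u` with
`q_c(t) = t^m - (t - 1) ∑ c_l t^l`; as `c` varies, `q_c` runs over the polynomials of degree `≤ m`
with `q(1) = 1`. The Anderson step is `e_{k+1} = A (e_k - X_k β)` where `β` minimises
`‖P (f_k - D_k c)‖`, and `Σ D_μ⁻¹ Wᵀ e_{k+1}` turns out to be the eigencoordinate vector of
`P (f_k - D_k β)`. So the error is at most the weighted residual of any `c`. Taking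
`q_c(t) = t^m p(1/t)` with `p` the Chebyshev polynomial `T_m` moved from `[-1, 1]` to
`[1/b, 1/a]` and normalised by `p(1) = 1` gives `|q_c(d_i)| ≤ C(a, b, m) |d_i|^m`.
-/

open Matrix

noncomputable def enorm {n : ℕ} (v : Fin n → ℝ) : ℝ :=
  Real.sqrt (∑ i, v i ^ 2)

open Polynomial Finset

theorem Polynomial.exists_pow_sub_mul_sum_eq_pow_mul_eval_inv {K : Type*} [Field K] {m : ℕ}
    {p : K[X]} (hp : p.natDegree ≤ m) (hp1 : p.eval 1 = 1) :
    ∃ c : Fin m → K, ∀ t ≠ 0,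
      t ^ m - (t - 1) * ∑ l : Fin m, c l * t ^ (l : ℕ) = t ^ m * p.eval t⁻¹ := by
  set q := p.reflect m
  have hq : ∀ t ≠ (0 : K), q.eval t = t ^ m * p.eval t⁻¹ := by
    intro t ht
    let := invertibleOfNonzero (inv_ne_zero ht)
    have h := eval₂_reflect_mul_pow (RingHom.id K) t⁻¹ m p hp
    rw [invOf_eq_inv, inv_inv, ← eval, ← eval] at h
    rw [← h, inv_pow, mul_comm, mul_assoc, inv_mul_cancel₀ (pow_ne_zero m ht), mul_one]
  have hroot : (X ^ m - q).IsRoot 1 := by simp [hq 1 one_ne_zero, hp1]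
  set r := (X ^ m - q) /ₘ (X - C 1)
  have hr : (X - C 1) * r = X ^ m - q := mul_divByMonic_eq_iff_isRoot.2 hroot
  have hr_eval : ∀ t, r.eval t = ∑ l : Fin m, r.coeff l * t ^ (l : ℕ) := by
    intro t
    rcases eq_or_ne r 0 with hr0 | hr0
    · simp [hr0]
    have hdeg : 1 + r.natDegree ≤ m := by
      rw [← natDegree_X_sub_C (1 : K), ← natDegree_mul (X_sub_C_ne_zero 1) hr0, hr]
      refine (natDegree_sub_le _ _).trans (max_le (natDegree_X_pow_le m) ?_)
      exact natDegree_reflect_le.trans (max_le le_rfl hp)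
    rw [eval_eq_sum_range' (by omega : r.natDegree < m),
      Fin.sum_univ_eq_sum_range (fun l => r.coeff l * t ^ l)]
  refine ⟨fun l => r.coeff l, fun t ht => ?_⟩
  have h := congrArg (eval t) hr
  simp only [eval_mul, eval_sub, eval_X, eval_C, eval_pow] at h
  rw [← hr_eval, ← hq t ht]
  linear_combination -h

section Chebyshev

variable {a b : ℝ}

theorem sub_mul_sub_pos_of_notMem_Icc {c : ℝ} (hab : a ≤ b) (hc : c ∉ Set.Icc a b) :
    0 < (a - c) * (b - c) := by
  rw [Set.mem_Icc, not_and_or, not_le, not_le] at hc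
  rcases hc with hc | hc <;> nlinarith

/-- The affine map sending `1/b ↦ -1` and `1/a ↦ 1`. -/
noncomputable def chebyshevShift (a b s : ℝ) : ℝ := (2 * a * b * s - a - b) / (b - a)

theorem chebyshevShift_sq_sub_one (hab : a < b) (s : ℝ) :
    chebyshevShift a b s ^ 2 - 1 = 4 * (a * b * s - a) * (a * b * s - b) / (b - a) ^ 2 := by
  have : b - a ≠ 0 := sub_ne_zero.2 hab.ne'
  rw [chebyshevShift]
  field_simp
  ring

theorem one_le_abs_chebyshevShift_one (hab : a < b) (h0 : (0 : ℝ) ∉ Set.Icc a b)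
    (h1 : (1 : ℝ) ∉ Set.Icc a b) : 1 ≤ |chebyshevShift a b 1| := by
  have hab0 := sub_mul_sub_pos_of_notMem_Icc hab.le h0
  have hab1 := sub_mul_sub_pos_of_notMem_Icc hab.le h1
  rw [← one_le_sq_iff_one_le_abs, ← sub_nonneg, chebyshevShift_sq_sub_one hab, mul_one]
  exact div_nonneg (by nlinarith) (sq_nonneg _)

theorem abs_chebyshevShift_inv_le_one (hab : a < b) (h0 : (0 : ℝ) ∉ Set.Icc a b) {t : ℝ}
    (ht : t ∈ Set.Icc a b) : |chebyshevShift a b t⁻¹| ≤ 1 := by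
  have hab0 : 0 < a * b := by simpa using sub_mul_sub_pos_of_notMem_Icc hab.le h0
  have ht0 : t ≠ 0 := fun h => h0 (h ▸ ht)
  have hprod : (a * b * t⁻¹ - a) * (a * b * t⁻¹ - b) ≤ 0 := by
    have : (a * b * t⁻¹ - a) * (a * b * t⁻¹ - b) = a * b * ((a - t) * (b - t)) / t ^ 2 := by
      field_simp
    rw [this]
    exact div_nonpos_of_nonpos_of_nonneg
      (mul_nonpos_of_nonneg_of_nonpos hab0.le (by nlinarith [ht.1, ht.2])) (sq_nonneg t)
  rw [← sq_le_one_iff_abs_le_one, ← sub_nonpos, chebyshevShift_sq_sub_one hab]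
  exact div_nonpos_of_nonpos_of_nonneg (by rw [mul_assoc]; linarith) (sq_nonneg _)

noncomputable def shiftedChebyshev (a b : ℝ) (m : ℕ) : ℝ[X] :=
  (Chebyshev.T ℝ m).comp (C (2 * a * b / (b - a)) * X - C ((a + b) / (b - a)))

theorem eval_shiftedChebyshev (m : ℕ) (s : ℝ) :
    (shiftedChebyshev a b m).eval s = (Chebyshev.T ℝ m).eval (chebyshevShift a b s) := by
  simp only [shiftedChebyshev, chebyshevShift, eval_comp, eval_sub, eval_mul, eval_C, eval_X]
  ring_nf

theorem natDegree_shiftedChebyshev_le (m : ℕ) : (shiftedChebyshev a b m).natDegree ≤ m := by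
  refine natDegree_comp_le.trans ?_
  rw [Chebyshev.natDegree_T, Int.natAbs_natCast]
  refine mul_le_of_le_one_right (Nat.zero_le m) ?_
  rw [natDegree_sub_C]
  exact (natDegree_C_mul_le _ _).trans natDegree_X_le

theorem exists_coeffs_abs_pow_sub_mul_sum_le (hab : a < b) (h0 : (0 : ℝ) ∉ Set.Icc a b)
    (h1 : (1 : ℝ) ∉ Set.Icc a b) (m : ℕ) :
    ∃ c : Fin m → ℝ, ∀ t ∈ Set.Icc a b,
      |t ^ m - (t - 1) * ∑ l : Fin m, c l * t ^ (l : ℕ)| ≤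
        |(Chebyshev.T ℝ m).eval (chebyshevShift a b 1)|⁻¹ * |t| ^ m := by
  set K := (Chebyshev.T ℝ m).eval (chebyshevShift a b 1)
  have hK : 1 ≤ |K| :=
    Chebyshev.one_le_abs_eval_T_real m (one_le_abs_chebyshevShift_one hab h0 h1)
  have hp1 : (C K⁻¹ * shiftedChebyshev a b m).eval 1 = 1 := by
    rw [eval_mul, eval_C, eval_shiftedChebyshev, inv_mul_cancel₀ (abs_pos.1 (hK.trans_lt' one_pos))]
  obtain ⟨c, hc⟩ := exists_pow_sub_mul_sum_eq_pow_mul_eval_inv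
    ((natDegree_C_mul_le _ _).trans (natDegree_shiftedChebyshev_le m)) hp1
  refine ⟨c, fun t ht => ?_⟩
  have hT := Chebyshev.abs_eval_T_real_le_one m (abs_chebyshevShift_inv_le_one hab h0 ht)
  rw [hc t (fun h => h0 (h ▸ ht)), eval_mul, eval_C, eval_shiftedChebyshev, abs_mul, abs_mul,
    abs_inv, abs_pow]
  calc |t| ^ m * (|K|⁻¹ * |(Chebyshev.T ℝ m).eval (chebyshevShift a b t⁻¹)|)
      ≤ |t| ^ m * (|K|⁻¹ * 1) := by gcongr
    _ = |K|⁻¹ * |t| ^ m := by ring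

end Chebyshev

section Spectral

variable {ι R : Type*} [Fintype ι] [DecidableEq ι] [CommRing R]

theorem diagonal_mulVec_eq_mul (v w : ι → R) : diagonal v *ᵥ w = v * w := by
  funext i
  exact mulVec_diagonal v w i

theorem transpose_mulVec_conj_diagonal_mulVec {W : Matrix ι ι R} (hW : Wᵀ * W = 1)
    (δ v : ι → R) : Wᵀ *ᵥ ((W * diagonal δ * Wᵀ) *ᵥ v) = δ * (Wᵀ *ᵥ v) := by
  rw [mulVec_mulVec, ← Matrix.mul_assoc, ← Matrix.mul_assoc, hW, Matrix.one_mul, ← mulVec_mulVec,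
    diagonal_mulVec_eq_mul]

theorem transpose_conj_diagonal (W : Matrix ι ι R) (δ : ι → R) :
    (W * diagonal δ * Wᵀ)ᵀ = W * diagonal δ * Wᵀ := by
  rw [transpose_mul, transpose_mul, transpose_transpose, diagonal_transpose, Matrix.mul_assoc]

theorem inv_diagonal_mul_inv_diagonal_sub_one {K : Type*} [Field K] {d : ι → K}
    (hd0 : ∀ i, d i ≠ 0) (hd1 : ∀ i, d i ≠ 1) :
    (diagonal d * (diagonal d - 1)⁻¹)⁻¹ = diagonal ((d - 1) / d) := by
  have hsub : (diagonal d - 1)⁻¹ = diagonal (d - 1)⁻¹ := by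
    refine inv_eq_left_inv ?_
    rw [← diagonal_one, diagonal_sub, diagonal_mul_diagonal]
    congr 1
    funext i
    exact inv_mul_cancel₀ (sub_ne_zero.2 (hd1 i))
  rw [hsub, diagonal_mul_diagonal]
  refine inv_eq_left_inv ?_
  rw [diagonal_mul_diagonal, ← diagonal_one]
  congr 1
  funext i
  simp only [Pi.div_apply, Pi.sub_apply, Pi.inv_apply, Pi.one_apply]
  field_simp [hd0 i, sub_ne_zero.2 (hd1 i)]

theorem diagonal_sub_one_div_mulVec_mul {K : Type*} [Field K] {d : ι → K} (hd0 : ∀ i, d i ≠ 0)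
    (v : ι → K) : diagonal ((d - 1) / d) *ᵥ (d * v) = (d - 1) * v := by
  rw [diagonal_mulVec_eq_mul]
  funext i
  simp only [Pi.mul_apply, Pi.div_apply, Pi.sub_apply, Pi.one_apply]
  field_simp [hd0 i]

theorem transpose_mulVec_sub_one_mulVec {W A : Matrix ι ι R} {d : ι → R}
    (hWA : ∀ v, Wᵀ *ᵥ (A *ᵥ v) = d * Wᵀ *ᵥ v) (v : ι → R) :
    Wᵀ *ᵥ ((A - 1) *ᵥ v) = (d - 1) * Wᵀ *ᵥ v := by
  rw [sub_mulVec, one_mulVec, mulVec_sub, hWA, sub_one_mul]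

end Spectral

section EuclideanNorm

variable {n : ℕ}

theorem enorm_eq_sqrt_dotProduct (v : Fin n → ℝ) : _root_.enorm v = Real.sqrt (v ⬝ᵥ v) := by
  simp only [_root_.enorm, dotProduct, sq]

theorem enorm_le_enorm_add_of_dotProduct_eq_zero {v w : Fin n → ℝ} (h : v ⬝ᵥ w = 0) :
    _root_.enorm v ≤ _root_.enorm (v + w) := by
  rw [enorm_eq_sqrt_dotProduct, enorm_eq_sqrt_dotProduct]
  apply Real.sqrt_le_sqrt
  have hw : 0 ≤ w ⬝ᵥ w := dotProduct_self_star_nonneg w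
  rw [add_dotProduct, dotProduct_add, dotProduct_add, h, dotProduct_comm w v, h]
  linarith

theorem enorm_mulVec_of_transpose_mul_self {W : Matrix (Fin n) (Fin n) ℝ} (hW : Wᵀ * W = 1)
    (v : Fin n → ℝ) : _root_.enorm (W *ᵥ v) = _root_.enorm v := by
  rw [enorm_eq_sqrt_dotProduct, enorm_eq_sqrt_dotProduct, dotProduct_mulVec, ← mulVec_transpose,
    mulVec_mulVec, hW, one_mulVec]

theorem enorm_conj_diagonal_mulVec {W : Matrix (Fin n) (Fin n) ℝ} (hW : Wᵀ * W = 1)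
    (σ v : Fin n → ℝ) :
    _root_.enorm ((W * diagonal σ * Wᵀ) *ᵥ v) = _root_.enorm (σ * (Wᵀ *ᵥ v)) := by
  rw [← mulVec_mulVec, ← mulVec_mulVec, diagonal_mulVec_eq_mul,
    enorm_mulVec_of_transpose_mul_self hW]

theorem enorm_le_mul_enorm_of_abs_le {v w : Fin n → ℝ} {c : ℝ} (hc : 0 ≤ c)
    (h : ∀ i, |v i| ≤ c * |w i|) : _root_.enorm v ≤ c * _root_.enorm w := by
  rw [_root_.enorm, _root_.enorm, ← Real.sqrt_sq hc, ← Real.sqrt_mul (sq_nonneg c), mul_sum]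
  refine Real.sqrt_le_sqrt (sum_le_sum fun i _ => ?_)
  rw [← mul_pow, ← sq_abs (v i), ← sq_abs (c * w i), abs_mul, abs_of_nonneg hc]
  exact pow_le_pow_left₀ (abs_nonneg _) (h i) 2

theorem enorm_mul_le_iSup_mul {σ v w : Fin n → ℝ} {c : ℝ} (hc : 0 ≤ c)
    (h : ∀ i, |v i| ≤ c * |w i|) : _root_.enorm (σ * v) ≤ (⨆ i, |σ i|) * c * _root_.enorm w := by
  have hσ : ∀ i, |σ i| ≤ ⨆ j, |σ j| := le_ciSup (Finite.bddAbove_range _)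
  have hσ0 : 0 ≤ ⨆ i, |σ i| := Real.iSup_nonneg fun i => abs_nonneg (σ i)
  refine enorm_le_mul_enorm_of_abs_le (mul_nonneg hσ0 hc) fun i => ?_
  rw [Pi.mul_apply, abs_mul, mul_assoc]
  exact mul_le_mul (hσ i) (h i) (abs_nonneg _) hσ0

theorem enorm_mulVec_sub_mulVec_lstsq_le {κ : Type*} [Fintype κ] [DecidableEq κ]
    {P : Matrix (Fin n) (Fin n) ℝ} (hP : Pᵀ = P) {D : Matrix (Fin n) κ ℝ}
    (hG : IsUnit (Dᵀ * (P * P) * D).det) (f : Fin n → ℝ) (c : κ → ℝ) :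
    _root_.enorm (P *ᵥ (f - D *ᵥ (((Dᵀ * (P * P) * D)⁻¹ * Dᵀ * (P * P)) *ᵥ f))) ≤
      _root_.enorm (P *ᵥ (f - D *ᵥ c)) := by
  set β := ((Dᵀ * (P * P) * D)⁻¹ * Dᵀ * (P * P)) *ᵥ f
  have hGβ : (Dᵀ * (P * P) * D) *ᵥ β = Dᵀ *ᵥ (P *ᵥ (P *ᵥ f)) := by
    rw [mulVec_mulVec, ← Matrix.mul_assoc, ← Matrix.mul_assoc _ _ Dᵀ, Matrix.mul_nonsing_inv _ hG,
      Matrix.one_mul, ← mulVec_mulVec, ← mulVec_mulVec]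
  have hnormal : Dᵀ *ᵥ (P *ᵥ (P *ᵥ (f - D *ᵥ β))) = 0 := by
    rw [mulVec_sub, mulVec_sub, mulVec_sub, sub_eq_zero, ← hGβ]
    simp only [mulVec_mulVec, Matrix.mul_assoc]
  have hsplit : P *ᵥ (f - D *ᵥ c) = P *ᵥ (f - D *ᵥ β) + P *ᵥ (D *ᵥ (β - c)) := by
    rw [← mulVec_add, mulVec_sub D β c]
    abel_nf
  rw [hsplit]
  apply enorm_le_enorm_add_of_dotProduct_eq_zero
  rw [dotProduct_mulVec, dotProduct_mulVec, ← mulVec_transpose, ← mulVec_transpose, hP, hnormal,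
    zero_dotProduct]

end EuclideanNorm

section Anderson

variable {ι κ R : Type*} [CommRing R]

theorem mulVec_add_sub_fixedPoint [Fintype ι] {A : Matrix ι ι R} {rhs xstar : ι → R}
    (hfix : xstar = A *ᵥ xstar + rhs) (y : ι → R) :
    A *ᵥ y + rhs - xstar = A *ᵥ (y - xstar) := by
  rw [mulVec_sub]
  nth_rw 1 [hfix]
  abel

theorem mulVec_add_sub_self [Fintype ι] [DecidableEq ι] {A : Matrix ι ι R} {rhs xstar : ι → R}
    (hfix : xstar = A *ᵥ xstar + rhs) (y : ι → R) :
    A *ᵥ y + rhs - y = (A - 1) *ᵥ (y - xstar) := by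
  rw [sub_mulVec, one_mulVec, ← mulVec_add_sub_fixedPoint hfix]
  abel

theorem of_diff_eq_mul [Fintype ι] {B : Matrix ι ι R} {g h : ℕ → ι → R} {w : ι → R}
    (hg : ∀ j, g j = B *ᵥ h j + w) (s : κ → ℕ) :
    (of fun i l => g (s l + 1) i - g (s l) i) = B * of fun i l => h (s l + 1) i - h (s l) i := by
  ext i l
  simp only [of_apply, mul_apply, hg, Pi.add_apply, add_sub_add_right_eq_sub, mulVec, dotProduct,
    mul_sub, sum_sub_distrib]

theorem of_diff_mulVec [Fintype κ] (g : ℕ → ι → R) (s : κ → ℕ) (c : κ → R) :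
    (of fun i l => g (s l + 1) i - g (s l) i) *ᵥ c = ∑ l, c l • (g (s l + 1) - g (s l)) := by
  funext i
  simp only [mulVec, dotProduct, of_apply, Finset.sum_apply, Pi.smul_apply, Pi.sub_apply,
    smul_eq_mul, mul_comm]

theorem anderson_step_sub_eq [Fintype ι] [Fintype κ] [DecidableEq ι] {A : Matrix ι ι R}
    {X D : Matrix ι κ R} (hD : D = (A - 1) * X) (M : Matrix κ ι R) {xk fk xk1 xstar : ι → R}
    (hfk : fk = (A - 1) *ᵥ (xk - xstar)) (hxk1 : xk1 = xk + (1 - (X + D) * M) *ᵥ fk) :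
    xk1 - xstar = A *ᵥ (xk - xstar - X *ᵥ (M *ᵥ fk)) := by
  rw [hD, Matrix.sub_mul, Matrix.one_mul, add_sub_cancel] at hxk1
  rw [hxk1, sub_mulVec, one_mulVec, ← mulVec_mulVec, ← mulVec_mulVec, mulVec_sub A, hfk,
    sub_mulVec A 1, one_mulVec]
  abel

theorem eq_pow_mul_of_succ_eq_mul {M : Type*} [Monoid M] {z : ℕ → M} {d : M} {k : ℕ}
    (h : ∀ j < k, z (j + 1) = d * z j) {i : ℕ} : ∀ l, i + l ≤ k → z (i + l) = d ^ l * z i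
  | 0, _ => by simp
  | l + 1, hl => by
    rw [← add_assoc, h _ (by omega), eq_pow_mul_of_succ_eq_mul h l (by omega), pow_succ',
      mul_assoc]

theorem transpose_mulVec_krylov_residual [Fintype ι] {m k : ℕ} (hmk : m ≤ k)
    {W : Matrix ι ι R} {x : ℕ → ι → R} {xstar d : ι → R}
    (hstep : ∀ j < k, Wᵀ *ᵥ (x (j + 1) - xstar) = d * Wᵀ *ᵥ (x j - xstar)) (c : Fin m → R) :
    Wᵀ *ᵥ (x k - xstar - (of fun i (l : Fin m) => x (k - m + l + 1) i - x (k - m + l) i) *ᵥ c) =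
      (d ^ m - (d - 1) * ∑ l : Fin m, c l • d ^ (l : ℕ)) * Wᵀ *ᵥ (x (k - m) - xstar) := by
  have hpow : ∀ l ≤ m, Wᵀ *ᵥ (x (k - m + l) - xstar) = d ^ l * Wᵀ *ᵥ (x (k - m) - xstar) :=
    fun l hl => eq_pow_mul_of_succ_eq_mul (z := fun j => Wᵀ *ᵥ (x j - xstar)) hstep l (by omega)
  nth_rw 1 [← Nat.sub_add_cancel hmk]
  rw [of_diff_mulVec x (fun l : Fin m => k - m + l), mulVec_sub, mulVec_sum, hpow m le_rfl,
    sub_mul, mul_assoc, sum_mul, mul_sum]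
  congr 1
  refine sum_congr rfl fun l _ => ?_
  rw [mulVec_smul, ← sub_sub_sub_cancel_right (x _) (x _) xstar, mulVec_sub, hpow l l.isLt.le,
    add_assoc (k - m), hpow (l + 1) l.isLt, smul_mul_assoc, sub_one_mul, mul_smul_comm,
    ← smul_sub, pow_succ', mul_assoc]

end Anderson

theorem enorm_mul_krylov_residual_le {n m : ℕ} {σ d u : Fin n → ℝ} {c : Fin m → ℝ} {C : ℝ}
    (hC : 0 ≤ C)
    (hc : ∀ i, |d i ^ m - (d i - 1) * ∑ l : Fin m, c l * d i ^ (l : ℕ)| ≤ C * |d i| ^ m) :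
    _root_.enorm (σ * ((d - 1) * ((d ^ m - (d - 1) * ∑ l : Fin m, c l • d ^ (l : ℕ)) * u))) ≤
      (⨆ i, |σ i|) * C * _root_.enorm ((d - 1) * (d ^ m * u)) := by
  refine enorm_mul_le_iSup_mul hC fun i => ?_
  simp only [Pi.mul_apply, Pi.sub_apply, Pi.one_apply, Pi.pow_apply, Finset.sum_apply,
    Pi.smul_apply, smul_eq_mul, abs_mul, abs_pow]
  exact (mul_le_mul_of_nonneg_left (mul_le_mul_of_nonneg_right (hc i) (abs_nonneg _))
    (abs_nonneg _)).trans_eq (by ring)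

theorem stmt9_general {n m k : ℕ} (hmk : m ≤ k)
    (a b : ℝ) (hab : a < b)
    (h0 : (0 : ℝ) ∉ Set.Icc a b) (h1 : (1 : ℝ) ∉ Set.Icc a b)
    (W Λ A P : Matrix (Fin n) (Fin n) ℝ) (d σ : Fin n → ℝ)
    (hΛ : Λ = Matrix.diagonal d)
    (hW1 : Wᵀ * W = 1)
    (hA : A = W * Λ * Wᵀ)
    (hP : P = W * Matrix.diagonal σ * Wᵀ)
    (hd : ∀ i, d i ∈ Set.Icc a b)
    (rhs xstar : Fin n → ℝ) (hfix : xstar = A.mulVec xstar + rhs)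
    (x : ℕ → Fin n → ℝ)
    (hx : ∀ j < k, x (j + 1) = A.mulVec (x j) + rhs)
    (f : ℕ → Fin n → ℝ)
    (hf : ∀ j, f j = A.mulVec (x j) + rhs - x j)
    (Dk Xk : Matrix (Fin n) (Fin m) ℝ)
    (hDk : Dk = Matrix.of fun i (l : Fin m) => f (k - m + l + 1) i - f (k - m + l) i)
    (hXk : Xk = Matrix.of fun i (l : Fin m) => x (k - m + l + 1) i - x (k - m + l) i)
    (hDkinv : IsUnit (Dkᵀ * (P * P) * Dk).det)
    (Sk : Matrix (Fin n) (Fin n) ℝ)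
    (hSk : Sk = (Xk + Dk) * (Dkᵀ * (P * P) * Dk)⁻¹ * Dkᵀ * (P * P))
    (hxk1 : x (k + 1) = x k + (1 - Sk).mulVec (f k))
    (Dμ : Matrix (Fin n) (Fin n) ℝ)
    (hDμ : Dμ = Λ * (Λ - 1)⁻¹) :
    _root_.enorm ((Matrix.diagonal σ * Dμ⁻¹).mulVec (Wᵀ.mulVec (x (k + 1) - xstar))) ≤
      (⨆ i, |σ i|) *
        |(Polynomial.Chebyshev.T ℝ m).eval ((2 * a * b - a - b) / (b - a))|⁻¹ *
          _root_.enorm (Dμ⁻¹.mulVec (Wᵀ.mulVec (A.mulVec (x k - xstar)))) := by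
  have hd0 : ∀ i, d i ≠ 0 := fun i h => h0 (h ▸ hd i)
  have hDμinv : Dμ⁻¹ = diagonal ((d - 1) / d) :=
    hDμ ▸ hΛ ▸ inv_diagonal_mul_inv_diagonal_sub_one hd0 fun i h => h1 (h ▸ hd i)
  have hWA : ∀ v, Wᵀ *ᵥ (A *ᵥ v) = d * Wᵀ *ᵥ v :=
    hA ▸ hΛ ▸ transpose_mulVec_conj_diagonal_mulVec hW1 d
  have hstep : ∀ j < k, Wᵀ *ᵥ (x (j + 1) - xstar) = d * Wᵀ *ᵥ (x j - xstar) := fun j hj => by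
    rw [hx j hj, mulVec_add_sub_fixedPoint hfix, hWA]
  have hres : ∀ j, f j = (A - 1) *ᵥ (x j - xstar) :=
    fun j => (hf j).trans (mulVec_add_sub_self hfix _)
  have hDX : Dk = (A - 1) * Xk := hDk ▸ hXk ▸
    of_diff_eq_mul (fun j => (hf j).trans (by rw [sub_mulVec, one_mulVec]; abel)) _
  have hPres : ∀ c, _root_.enorm (P *ᵥ (f k - Dk *ᵥ c)) =
      _root_.enorm (σ * ((d - 1) * Wᵀ *ᵥ (x k - xstar - Xk *ᵥ c))) := fun c => by
    rw [hP, enorm_conj_diagonal_mulVec hW1, hres, hDX, ← mulVec_mulVec, ← mulVec_sub,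
      transpose_mulVec_sub_one_mulVec hWA]
  have herr := anderson_step_sub_eq hDX ((Dkᵀ * (P * P) * Dk)⁻¹ * Dkᵀ * (P * P)) (hres k)
    (hxk1.trans (by rw [hSk]; simp only [Matrix.mul_assoc]))
  have hek := eq_pow_mul_of_succ_eq_mul (z := fun j => Wᵀ *ᵥ (x j - xstar)) hstep m
    (Nat.sub_add_cancel hmk).le
  rw [Nat.sub_add_cancel hmk] at hek
  obtain ⟨c, hc⟩ := exists_coeffs_abs_pow_sub_mul_sum_le hab h0 h1 m
  rw [chebyshevShift, mul_one] at hc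
  rw [hDμinv, herr, ← mulVec_mulVec, hWA, diagonal_sub_one_div_mulVec_mul hd0,
    diagonal_mulVec_eq_mul, ← hPres, hWA, diagonal_sub_one_div_mulVec_mul hd0, hek]
  calc _ ≤ _root_.enorm (P *ᵥ (f k - Dk *ᵥ c)) :=
        enorm_mulVec_sub_mulVec_lstsq_le (hP ▸ transpose_conj_diagonal W σ) hDkinv _ c
    _ = _root_.enorm (σ * ((d - 1) * ((d ^ m - (d - 1) * ∑ l : Fin m, c l • d ^ (l : ℕ)) *
          Wᵀ *ᵥ (x (k - m) - xstar)))) := by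
        rw [hPres, hXk, transpose_mulVec_krylov_residual hmk hstep]
    _ ≤ _ := enorm_mul_krylov_residual_le (inv_nonneg.2 (abs_nonneg _)) fun i => hc (d i) (hd i)

/-- Weighted one-step Anderson acceleration error bound when `A = W Λ Wᵀ` and
`P = W Σ Wᵀ` share the eigenvector matrix `W`:
`‖Σ D_μ⁻¹ Wᵀ e_{k+1}‖₂ ≤ (max_i |Σ_ii|) C(a,b,m) ‖D_μ⁻¹ Wᵀ A e_k‖₂`. -/
theorem stmt9 {n m k : ℕ} (hn : 0 < n) (hm : 0 < m) (hmk : m ≤ k)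
    (a b : ℝ) (hab : a < b)
    (h0 : (0 : ℝ) ∉ Set.Icc a b) (h1 : (1 : ℝ) ∉ Set.Icc a b)
    (W Λ A P : Matrix (Fin n) (Fin n) ℝ) (d σ : Fin n → ℝ)
    (hΛ : Λ = Matrix.diagonal d)
    (hW1 : Wᵀ * W = 1) (hW2 : W * Wᵀ = 1)
    (hA : A = W * Λ * Wᵀ)
    (hP : P = W * Matrix.diagonal σ * Wᵀ)
    (hσ : ∀ i, 0 < σ i)
    (hd : ∀ i, d i ∈ Set.Icc a b)
    (rhs xstar : Fin n → ℝ) (hfix : xstar = A.mulVec xstar + rhs)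
    (x : ℕ → Fin n → ℝ)
    (hx : ∀ j < k, x (j + 1) = A.mulVec (x j) + rhs)
    (f : ℕ → Fin n → ℝ)
    (hf : ∀ j, f j = A.mulVec (x j) + rhs - x j)
    (Dk Xk : Matrix (Fin n) (Fin m) ℝ)
    (hDk : Dk = Matrix.of fun i (l : Fin m) => f (k - m + l + 1) i - f (k - m + l) i)
    (hXk : Xk = Matrix.of fun i (l : Fin m) => x (k - m + l + 1) i - x (k - m + l) i)
    (hDkinv : IsUnit (Dkᵀ * (P * P) * Dk).det)
    (Sk : Matrix (Fin n) (Fin n) ℝ)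
    (hSk : Sk = (Xk + Dk) * (Dkᵀ * (P * P) * Dk)⁻¹ * Dkᵀ * (P * P))
    (hxk1 : x (k + 1) = x k + (1 - Sk).mulVec (f k))
    (Dμ : Matrix (Fin n) (Fin n) ℝ)
    (hDμ : Dμ = Λ * (Λ - 1)⁻¹) :
    _root_.enorm ((Matrix.diagonal σ * Dμ⁻¹).mulVec (Wᵀ.mulVec (x (k + 1) - xstar))) ≤
      (⨆ i, |σ i|) *
        |(Polynomial.Chebyshev.T ℝ m).eval ((2 * a * b - a - b) / (b - a))|⁻¹ *
          _root_.enorm (Dμ⁻¹.mulVec (Wᵀ.mulVec (A.mulVec (x k - xstar)))) :=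
  stmt9_general hmk a b hab h0 h1 W Λ A P d σ hΛ hW1 hA hP hd rhs xstar hfix x hx f hf Dk Xk hDk hXk
    hDkinv Sk hSk hxk1 Dμ hDμ
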